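/- arXiv:1705.02485 — 4 statements merged into one kernel-verified Lean document; each statement's English description precedes it below -/
import Mathlib

section
/- If p and p+2 are both prime and p ≥ 5, then φ(p−1) ≥ φ(p+1) if and only if φ(p−1)/(p−1) ≥ φ(p+1)/(p+1), where φ is Euler's totient function. -/
theorem stmt_2 (p : ℕ) (hp : p.Prime) (hp2 : (p + 2).Prime) (h5 : 5 ≤ p) :
    Nat.totient (p - 1) ≥ Nat.totient (p + 1) ↔
      (Nat.totient (p - 1) : ℚ) / ((p : ℚ) - 1) ≥ (Nat.totient (p + 1) : ℚ) / ((p : ℚ) + 1) := by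
  obtain ⟨q, rfl⟩ : ∃ q, p = q + 5 := ⟨p - 5, by omega⟩
  have hm : (q + 5) - 1 = q + 4 := by omega
  rw [hm]
  set a := Nat.totient (q + 4) with ha
  set b := Nat.totient (q + 5 + 1) with hb
  have hb' : q + 5 + 1 = q + 6 := by omega
  have haeven : Even a := Nat.totient_even (by omega)
  have hbeven : Even b := by rw [hb, hb']; exact Nat.totient_even (by omega)
  have halt : a < q + 4 := Nat.totient_lt _ (by omega)
  have h4 : (0:ℚ) < (q:ℚ) + 4 := by positivity
  have h6 : (0:ℚ) < (q:ℚ) + 6 := by positivity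
  have hc1 : ((q + 5 : ℕ) : ℚ) - 1 = (q : ℚ) + 4 := by push_cast; ring
  have hc2 : ((q + 5 : ℕ) : ℚ) + 1 = (q : ℚ) + 6 := by push_cast; ring
  rw [hc1, hc2, ge_iff_le, ge_iff_le, div_le_div_iff₀ h6 h4]
  constructor
  · intro h
    have : (b : ℚ) ≤ (a : ℚ) := by exact_mod_cast h
    nlinarith
  · intro h
    have hn : b * (q + 4) ≤ a * (q + 6) := by exact_mod_cast h
    obtain ⟨r, hr⟩ := haeven
    obtain ⟨s, hs⟩ := hbeven
    by_contra hab
    push_neg at hab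
    have h2 : a + 2 ≤ b := by omega
    have key : (a + 2) * (q + 4) ≤ a * (q + 6) :=
      le_trans (Nat.mul_le_mul_right _ h2) hn
    nlinarith [key, halt]
end

section
/- If p and p+2 are both prime with p ≥ 5, then φ(p−1) < φ(p+1) if and only if (1/2)·∏_{q | p−1, q ≥ 5, q prime} (1 − 1/q) < (1/3)·∏_{q | p+1, q ≥ 5, q prime} (1 − 1/q). -/
/-!
Since `φ n = n * ∏_{q ∣ n} (1 - 1/q)` and twin primes `p ≥ 5` satisfy `p ≡ 5 [MOD 6]`, the primes
below `5` contribute the factor `1/2` to `φ (p - 1)` and `1/3` to `φ (p + 1)`. Hence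
`φ (p - 1) = (p - 1) * a` and `φ (p + 1) = (p + 1) * b` with `a`, `b` the two sides of the claimed
inequality and `0 ≤ b ≤ 1/3`. If `a < b` then clearly `φ (p - 1) < φ (p + 1)`; if `b ≤ a`, then
`φ (p + 1) - φ (p - 1) ≤ 2 * b < 1`, which for integers means `φ (p + 1) ≤ φ (p - 1)`.
-/

lemma Nat.mod_six_eq_five_of_twin_prime {p : ℕ} (hp : p.Prime) (hp2 : (p + 2).Prime) (h5 : 5 ≤ p) :
    p % 6 = 5 := by
  have h2 : ¬ 2 ∣ p := fun h ↦ by have := hp.eq_one_or_self_of_dvd 2 h; omega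
  have h3 : ¬ 3 ∣ p := fun h ↦ by have := hp.eq_one_or_self_of_dvd 3 h; omega
  have h3' : ¬ 3 ∣ p + 2 := fun h ↦ by have := hp2.eq_one_or_self_of_dvd 3 h; omega
  have : p % 3 = 2 := by omega
  omega

lemma Nat.primeFactors_filter_lt_five {n : ℕ} (hn : n ≠ 0) :
    n.primeFactors.filter (· < 5) = ({2, 3} : Finset ℕ).filter (· ∣ n) := by
  ext q
  simp only [Finset.mem_filter, Nat.mem_primeFactors, Finset.mem_insert, Finset.mem_singleton]
  constructor
  · rintro ⟨⟨hq, hqn, -⟩, hq5⟩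
    refine ⟨?_, hqn⟩
    have hq4 : q ≠ 4 := by rintro rfl; norm_num at hq
    have := hq.two_le
    omega
  · rintro ⟨rfl | rfl, hqn⟩ <;> norm_num [hqn, hn]

lemma Nat.cast_totient_eq_mul_prod_dvd_two_three_mul_prod_five_le (n : ℕ) :
    (Nat.totient n : ℚ) = n * (∏ q ∈ ({2, 3} : Finset ℕ).filter (· ∣ n), (1 - 1 / (q : ℚ))) *
      ∏ q ∈ n.primeFactors.filter (5 ≤ ·), (1 - 1 / (q : ℚ)) := by
  rcases eq_or_ne n 0 with rfl | hn
  · simp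
  rw [Nat.totient_eq_mul_prod_factors, mul_assoc, ← Nat.primeFactors_filter_lt_five hn,
    ← Finset.prod_filter_mul_prod_filter_not n.primeFactors (· < 5)]
  simp only [not_lt, one_div]

lemma Finset.prod_one_sub_one_div_natCast_mem_Icc (s : Finset ℕ) :
    ∏ q ∈ s, (1 - 1 / (q : ℚ)) ∈ Set.Icc 0 1 := by
  have hq (q : ℕ) : 0 ≤ 1 - 1 / (q : ℚ) ∧ 1 - 1 / (q : ℚ) ≤ 1 :=
    ⟨by simpa using Nat.cast_inv_le_one q, sub_le_self _ (by positivity)⟩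
  exact ⟨prod_nonneg fun q _ ↦ (hq q).1, prod_le_one (fun q _ ↦ (hq q).1) fun q _ ↦ (hq q).2⟩

lemma Nat.lt_iff_of_cast_eq_mul_of_cast_eq_add_two_mul {x y m : ℕ} {a b : ℚ} (hm : 0 < m)
    (hb : 0 ≤ b) (hb2 : 2 * b < 1) (hx : (x : ℚ) = m * a) (hy : (y : ℚ) = (m + 2) * b) :
    x < y ↔ a < b := by
  have hm' : (0 : ℚ) < m := by exact_mod_cast hm
  constructor
  · intro h
    -- integrality turns `x < y` into a gap of `1`, more than the slack `2 * b`
    have : (x : ℚ) + 1 ≤ y := by exact_mod_cast h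
    by_contra! hba
    nlinarith
  · intro h
    have : (x : ℚ) < y := by rw [hx, hy]; nlinarith
    exact_mod_cast this

theorem stmt_5 (p : ℕ) (hp : p.Prime) (hp2 : (p + 2).Prime) (h5 : 5 ≤ p) :
    Nat.totient (p - 1) < Nat.totient (p + 1) ↔
      (1 / 2 : ℚ) * ∏ q ∈ (p - 1).primeFactors.filter (fun q => 5 ≤ q), (1 - 1 / (q : ℚ)) <
        (1 / 3 : ℚ) * ∏ q ∈ (p + 1).primeFactors.filter (fun q => 5 ≤ q), (1 - 1 / (q : ℚ)) := by
  have h6 := Nat.mod_six_eq_five_of_twin_prime hp hp2 h5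
  have hP := Finset.prod_one_sub_one_div_natCast_mem_Icc ((p + 1).primeFactors.filter (5 ≤ ·))
  apply Nat.lt_iff_of_cast_eq_mul_of_cast_eq_add_two_mul (m := p - 1) (by omega)
    (by linarith [hP.1]) (by linarith [hP.2])
  · have h2 : 2 ∣ p - 1 := by omega
    have h3 : ¬ 3 ∣ p - 1 := by omega
    rw [Nat.cast_totient_eq_mul_prod_dvd_two_three_mul_prod_five_le]
    simp only [Finset.filter_insert, Finset.filter_singleton, h2, h3, if_true, if_false,
      insert_empty_eq, Finset.prod_singleton]
    ring
  · have h2 : 2 ∣ p + 1 := by omega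
    have h3 : 3 ∣ p + 1 := by omega
    rw [Nat.cast_totient_eq_mul_prod_dvd_two_three_mul_prod_five_le,
      Nat.cast_sub (by omega : 1 ≤ p)]
    simp only [Finset.filter_insert, Finset.filter_singleton, h2, h3, if_true,
      Finset.prod_insert (by decide : 2 ∉ ({3} : Finset ℕ)), Finset.prod_singleton]
    push_cast
    ring
end

section
/- If p and p+2 are both prime, p ≥ 5, the primes 5, 7, 11 all divide p−1, and φ(p−1)/(p−1) ≥ φ(p+1)/(p+1), then ∏_{r | p+1, r prime, r ≥ 13} (1 + 1/(r−1)) ≥ 77/72. -/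
/-!
Since `φ(n)/n = ∏_{q ∣ n} (1 - 1/q)`, the primes `2, 5, 7, 11` of `p - 1` give
`φ(p-1)/(p-1) ≤ 24/77`. As `p - 1` and `p + 1` only share the prime `2`, and `3 ∣ p + 1` for twin
primes, the primes of `p + 1` below `13` are exactly `2` and `3`, so `φ(p+1)/(p+1) = P/3` with
`P = ∏_{r ∣ p+1, r ≥ 13} (1 - 1/r)`. Hence `P ≤ 72/77`, and the product in question is `P⁻¹`.
-/

open Finset

theorem totient_div_eq_prod_primeFactors {n : ℕ} (hn : n ≠ 0) :
    (n.totient : ℚ) / n = ∏ q ∈ n.primeFactors, (1 - (q : ℚ)⁻¹) := by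
  rw [Nat.totient_eq_mul_prod_factors, mul_div_cancel_left₀ _ (Nat.cast_ne_zero.mpr hn)]

theorem prod_primeFactors_one_sub_inv_le {n : ℕ} {s : Finset ℕ} (hs : s ⊆ n.primeFactors) :
    ∏ q ∈ n.primeFactors, (1 - (q : ℚ)⁻¹) ≤ ∏ q ∈ s, (1 - (q : ℚ)⁻¹) := by
  refine prod_le_prod_of_subset_of_le_one hs (fun q hq => ?_) (fun q _ _ => ?_)
  · have : (1 : ℚ) ≤ q := by exact_mod_cast (Nat.prime_of_mem_primeFactors hq).one_le
    simpa using inv_le_one_of_one_le₀ this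
  · have : (0 : ℚ) ≤ (q : ℚ)⁻¹ := by positivity
    linarith

theorem one_add_one_div_sub_one_eq_inv {K : Type*} [Field K] {x : K} (hx0 : x ≠ 0)
    (hx1 : x ≠ 1) : 1 + 1 / (x - 1) = (1 - x⁻¹)⁻¹ := by
  have : x - 1 ≠ 0 := sub_ne_zero.mpr hx1
  field_simp
  ring

theorem totient_div_le_of_dvd {n : ℕ} (hn : n ≠ 0) (h2 : 2 ∣ n) (h5 : 5 ∣ n) (h7 : 7 ∣ n)
    (h11 : 11 ∣ n) : (n.totient : ℚ) / n ≤ 24 / 77 := by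
  have hsub : ({2, 5, 7, 11} : Finset ℕ) ⊆ n.primeFactors := by
    simp only [insert_subset_iff, singleton_subset_iff, Nat.mem_primeFactors]
    exact ⟨⟨Nat.prime_two, h2, hn⟩, ⟨by norm_num, h5, hn⟩, ⟨by norm_num, h7, hn⟩,
      ⟨by norm_num, h11, hn⟩⟩
  rw [totient_div_eq_prod_primeFactors hn]
  refine (prod_primeFactors_one_sub_inv_le hsub).trans_eq ?_
  norm_num

theorem prod_one_add_one_div_sub_one_eq_inv {s : Finset ℕ} (hs : ∀ r ∈ s, 2 ≤ r) :
    ∏ r ∈ s, (1 + 1 / ((r : ℚ) - 1)) = (∏ r ∈ s, (1 - (r : ℚ)⁻¹))⁻¹ := by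
  rw [← prod_inv_distrib]
  refine prod_congr rfl fun r hr => ?_
  have : (2 : ℚ) ≤ r := by exact_mod_cast hs r hr
  exact one_add_one_div_sub_one_eq_inv (by positivity) (by linarith)

theorem prod_one_sub_inv_pos {s : Finset ℕ} (hs : ∀ r ∈ s, 2 ≤ r) :
    0 < ∏ r ∈ s, (1 - (r : ℚ)⁻¹) := prod_pos fun r hr => by
  have : (2 : ℚ) ≤ r := by exact_mod_cast hs r hr
  have : (r : ℚ)⁻¹ < 1 := inv_lt_one_of_one_lt₀ (by linarith)
  linarith

theorem eq_two_of_dvd_sub_one_of_dvd_add_one {n q : ℕ} (hq : q.Prime) (hn : 1 ≤ n)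
    (h₁ : q ∣ n - 1) (h₂ : q ∣ n + 1) : q = 2 := by
  have h : q ∣ 2 := by
    have := Nat.dvd_sub h₂ h₁
    rwa [show n + 1 - (n - 1) = 2 by omega] at this
  exact (Nat.prime_dvd_prime_iff_eq hq Nat.prime_two).mp h

theorem three_dvd_add_one_of_prime_of_prime_add_two {p : ℕ} (hp : p.Prime) (hp2 : (p + 2).Prime)
    (hp3 : p ≠ 3) : 3 ∣ p + 1 := by
  have h₁ : ¬ 3 ∣ p := fun h => hp3 ((Nat.prime_dvd_prime_iff_eq Nat.prime_three hp).mp h).symm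
  have h₂ : ¬ 3 ∣ p + 2 := fun h => by
    have := (Nat.prime_dvd_prime_iff_eq Nat.prime_three hp2).mp h
    have := hp.two_le
    omega
  omega

theorem filter_primeFactors_add_one_lt_thirteen {n : ℕ} (hn : 1 ≤ n) (h2 : 2 ∣ n + 1)
    (h3 : 3 ∣ n + 1) (h5 : 5 ∣ n - 1) (h7 : 7 ∣ n - 1) (h11 : 11 ∣ n - 1) :
    (n + 1).primeFactors.filter (fun r => ¬ 13 ≤ r) = {2, 3} := by
  ext q
  simp only [mem_filter, Nat.mem_primeFactors, not_le, mem_insert, mem_singleton]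
  constructor
  · rintro ⟨⟨hq, hqd, -⟩, hq13⟩
    have hq2 (h : q ∣ n - 1) : q = 2 := eq_two_of_dvd_sub_one_of_dvd_add_one hq hn h hqd
    have hsmall : q ∈ ({2, 3, 5, 7, 11} : Finset ℕ) :=
      (by decide : ∀ q < 13, q.Prime → q ∈ ({2, 3, 5, 7, 11} : Finset ℕ)) q hq13 hq
    simp only [mem_insert, mem_singleton] at hsmall
    rcases hsmall with rfl | rfl | rfl | rfl | rfl
    · exact .inl rfl
    · exact .inr rfl
    · exact absurd (hq2 h5) (by norm_num)
    · exact absurd (hq2 h7) (by norm_num)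
    · exact absurd (hq2 h11) (by norm_num)
  · rintro (rfl | rfl)
    · exact ⟨⟨Nat.prime_two, h2, by omega⟩, by norm_num⟩
    · exact ⟨⟨Nat.prime_three, h3, by omega⟩, by norm_num⟩

theorem stmt_8 (p : ℕ) (hp : p.Prime) (hp2 : (p + 2).Prime) (h5 : 5 ≤ p)
    (h5d : 5 ∣ p - 1) (h7d : 7 ∣ p - 1) (h11d : 11 ∣ p - 1)
    (h : (Nat.totient (p - 1) : ℚ) / ((p : ℚ) - 1) ≥ (Nat.totient (p + 1) : ℚ) / ((p : ℚ) + 1)) :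
    (77 / 72 : ℚ) ≤ ∏ r ∈ (p + 1).primeFactors.filter (fun r => 13 ≤ r),
      (1 + 1 / ((r : ℚ) - 1)) := by
  have hodd : Odd p := hp.odd_of_ne_two (by omega)
  have hbig : ∀ r ∈ (p + 1).primeFactors.filter (fun r => 13 ≤ r), 2 ≤ r :=
    fun r hr => by have := (mem_filter.mp hr).2; omega
  set P := ∏ r ∈ (p + 1).primeFactors.filter (fun r => 13 ≤ r), (1 - (r : ℚ)⁻¹)
  have hminus : (Nat.totient (p - 1) : ℚ) / ((p : ℚ) - 1) ≤ 24 / 77 := by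
    rw [← Nat.cast_pred (by omega)]
    exact totient_div_le_of_dvd (by omega) (Nat.Odd.sub_odd hodd odd_one).two_dvd h5d h7d h11d
  have hplus : (Nat.totient (p + 1) : ℚ) / ((p : ℚ) + 1) = P / 3 := by
    rw [← Nat.cast_succ, totient_div_eq_prod_primeFactors (by omega),
      ← prod_filter_mul_prod_filter_not _ (fun r => 13 ≤ r),
      filter_primeFactors_add_one_lt_thirteen (by omega) hodd.add_one.two_dvd
        (three_dvd_add_one_of_prime_of_prime_add_two hp hp2 (by omega)) h5d h7d h11d,
      prod_pair (by norm_num)]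
    push_cast
    ring
  rw [prod_one_add_one_div_sub_one_eq_inv hbig, le_inv_comm₀ (by norm_num)
    (prod_one_sub_inv_pos hbig)]
  linarith
end

section
/- Suppose j and j+k are positive integers with the same set of prime factors, g = gcd(j, j+k), and r is a positive integer such that (j/g)·r + 1 and ((j+k)/g)·r + 1 are primes not dividing j. Then n = j·(((j+k)/g)·r + 1) satisfies φ(n) = φ(n+k). -/
theorem stmt_13 (j k g r : ℕ) (hj : 0 < j) (hk : 0 < k) (hr : 0 < r)
    (hfac : ∀ q : ℕ, q.Prime → (q ∣ j ↔ q ∣ j + k))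
    (hg : g = Nat.gcd j (j + k))
    (h1 : (j / g * r + 1).Prime) (h2 : ((j + k) / g * r + 1).Prime)
    (hd1 : ¬ (j / g * r + 1) ∣ j) (hd2 : ¬ ((j + k) / g * r + 1) ∣ j) :
    Nat.totient (j * ((j + k) / g * r + 1)) =
      Nat.totient (j * ((j + k) / g * r + 1) + k) := by
  have hg0 : 0 < g := hg ▸ Nat.gcd_pos_of_pos_left _ hj
  obtain ⟨a, ha⟩ : g ∣ j := hg ▸ Nat.gcd_dvd_left _ _
  obtain ⟨b, hb⟩ : g ∣ j + k := hg ▸ Nat.gcd_dvd_right _ _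
  have haj : j / g = a := by rw [ha, Nat.mul_div_cancel_left _ hg0]
  have hbj : (j + k) / g = b := by rw [hb, Nat.mul_div_cancel_left _ hg0]
  rw [haj] at h1 hd1
  rw [hbj] at h2 hd2 ⊢
  have hkey : j * (b * r + 1) + k = (j + k) * (a * r + 1) := by
    have h : j * (b * r) = (j + k) * (a * r) := by rw [hb, ha]; ring
    calc j * (b * r + 1) + k = j * (b * r) + (j + k) := by ring
    _ = (j + k) * (a * r) + (j + k) := by rw [h]
    _ = (j + k) * (a * r + 1) := by ring
  rw [hkey]
  have hS : j.primeFactors = (j + k).primeFactors := by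
    ext q
    simp only [Nat.mem_primeFactors]
    constructor
    · rintro ⟨hq, hd, -⟩; exact ⟨hq, (hfac q hq).1 hd, by omega⟩
    · rintro ⟨hq, hd, -⟩; exact ⟨hq, (hfac q hq).2 hd, hj.ne'⟩
  have hjk : Nat.totient j * (j + k) = Nat.totient (j + k) * j := by
    have e1 := Nat.totient_mul_prod_primeFactors j
    have e2 := Nat.totient_mul_prod_primeFactors (j + k)
    rw [← hS] at e2
    have hP : 0 < ∏ p ∈ j.primeFactors, (p - 1) :=
      Finset.prod_pos fun p hp => Nat.sub_pos_of_lt (Nat.mem_primeFactors.mp hp).1.one_lt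
    exact Nat.eq_of_mul_eq_mul_right hP <| calc
      Nat.totient j * (j + k) * ∏ p ∈ j.primeFactors, (p - 1)
          = Nat.totient j * ((j + k) * ∏ p ∈ j.primeFactors, (p - 1)) := by ring
      _ = Nat.totient j * (Nat.totient (j + k) * ∏ p ∈ j.primeFactors, p) := by rw [e2]
      _ = Nat.totient (j + k) * (Nat.totient j * ∏ p ∈ j.primeFactors, p) := by ring
      _ = Nat.totient (j + k) * (j * ∏ p ∈ j.primeFactors, (p - 1)) := by rw [e1]
      _ = Nat.totient (j + k) * j * ∏ p ∈ j.primeFactors, (p - 1) := by ring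
  have hcop1 : Nat.Coprime j (b * r + 1) :=
    Nat.coprime_comm.mp ((h2.coprime_iff_not_dvd).mpr hd2)
  have hnd1 : ¬ (a * r + 1) ∣ (j + k) := fun h => hd1 ((hfac _ h1).2 h)
  have hcop2 : Nat.Coprime (j + k) (a * r + 1) :=
    Nat.coprime_comm.mp ((h1.coprime_iff_not_dvd).mpr hnd1)
  rw [Nat.totient_mul hcop1, Nat.totient_mul hcop2,
    Nat.totient_prime h2, Nat.totient_prime h1]
  simp only [Nat.add_sub_cancel]
  have hab : Nat.totient j * b = Nat.totient (j + k) * a := by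
    apply Nat.eq_of_mul_eq_mul_left hg0
    calc g * (Nat.totient j * b) = Nat.totient j * (g * b) := by ring
    _ = Nat.totient j * (j + k) := by rw [hb]
    _ = Nat.totient (j + k) * j := hjk
    _ = Nat.totient (j + k) * (g * a) := by rw [ha]
    _ = g * (Nat.totient (j + k) * a) := by ring
  calc Nat.totient j * (b * r) = Nat.totient j * b * r := by ring
  _ = Nat.totient (j + k) * a * r := by rw [hab]
  _ = Nat.totient (j + k) * (a * r) := by ring
end
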